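/- Let d ≥ 1, r > 0 and ε > 0. Then there exists δ' > 0 such that for every δ ∈ (0,δ') and every x ∈ ℝ^d, the set {z ∈ ℤ^d : Q_{δ,z} ∩ ∂B_r(x) ≠ ∅} is finite and δ^d · #{z ∈ ℤ^d : Q_{δ,z} ∩ ∂B_r(x) ≠ ∅} < ε, where ∂B_r(x) = {y ∈ ℝ^d : ‖y−x‖ = r} is the Euclidean sphere of radius r about x. -/

import Mathlib

/-! A grid cube of mesh `δ` has diameter `δ √d`, so every cube meeting the sphere `∂B_r(x)` lies in
the closed `δ √d`-thickening of that sphere. The cubes are disjoint with volume `δ^d`, so their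
number times `δ^d` is bounded by the volume of the thickening, which also forces there to be only
finitely many. The sphere is compact and Lebesgue-null, hence the volume of its `a`-thickening
tends to `0` with `a`, and by translation invariance this happens uniformly in the centre `x`. -/

open Metric

/-- The cube `δ z + [-δ/2, δ/2)^d` of the grid `𝒞_δ`. -/
def gridCube (d : ℕ) (δ : ℝ) (z : Fin d → ℤ) : Set (EuclideanSpace ℝ (Fin d)) :=
  {y | ∀ i : Fin d, δ * (z i : ℝ) - δ / 2 ≤ y i ∧ y i < δ * (z i : ℝ) + δ / 2}

open Function MeasureTheory Set ENNReal

namespace MeasureTheory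

variable {ι α : Type*} [MeasurableSpace α] {μ : Measure α} {A : ι → Set α} {B : Set α} {m : ℝ≥0∞}

lemma card_mul_le_measure_of_pairwiseDisjoint {t : Finset ι} (hA : ∀ i ∈ t, MeasurableSet (A i))
    (hdisj : (t : Set ι).PairwiseDisjoint A) (hm : ∀ i ∈ t, m ≤ μ (A i))
    (hAB : ∀ i ∈ t, A i ⊆ B) : t.card * m ≤ μ B :=
  calc (t.card : ℝ≥0∞) * m = ∑ _i ∈ t, m := by rw [Finset.sum_const, nsmul_eq_mul]
    _ ≤ ∑ i ∈ t, μ (A i) := Finset.sum_le_sum hm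
    _ = μ (⋃ i ∈ t, A i) := (measure_biUnion_finset hdisj hA).symm
    _ ≤ μ B := measure_mono (iUnion₂_subset hAB)

lemma finite_and_ncard_mul_le_measure_of_pairwiseDisjoint {s : Set ι} (hm₀ : m ≠ 0)
    (hB : μ B ≠ ∞) (hA : ∀ i ∈ s, MeasurableSet (A i)) (hdisj : s.PairwiseDisjoint A)
    (hm : ∀ i ∈ s, m ≤ μ (A i)) (hAB : ∀ i ∈ s, A i ⊆ B) : s.Finite ∧ s.ncard * m ≤ μ B := by
  have hcard : ∀ t : Finset ι, ↑t ⊆ s → t.card * m ≤ μ B := fun t hts =>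
    card_mul_le_measure_of_pairwiseDisjoint (fun i hi => hA i (hts hi)) (hdisj.subset hts)
      (fun i hi => hm i (hts hi)) (fun i hi => hAB i (hts hi))
  have hfin : s.Finite := by
    by_contra hinf
    obtain ⟨n, hn⟩ := ENNReal.exists_nat_mul_gt hm₀ hB
    obtain ⟨t, hts, rfl⟩ := Set.Infinite.exists_subset_card_eq hinf n
    exact (hcard t hts).not_gt hn
  refine ⟨hfin, ?_⟩
  rw [ncard_eq_toFinset_card s hfin]
  exact hcard _ (by simp)

end MeasureTheory

lemma Metric.subset_cthickening_of_forall_dist_le {α : Type*} [PseudoMetricSpace α] {s t : Set α}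
    {a : ℝ} (hst : (s ∩ t).Nonempty) (hs : ∀ p ∈ s, ∀ q ∈ s, dist p q ≤ a) :
    s ⊆ cthickening a t := by
  obtain ⟨p, hps, hpt⟩ := hst
  exact fun q hq => mem_cthickening_of_dist_le q p a t hpt (hs q hq p hps)

lemma Metric.preimage_add_cthickening_sphere {E : Type*} [SeminormedAddCommGroup E] (x : E)
    (a r : ℝ) : (x + ·) ⁻¹' cthickening a (sphere x r) = cthickening a (sphere 0 r) := by
  have himage : (x + ·) '' sphere (0 : E) r = sphere x r := by simp
  ext y
  rw [mem_preimage, mem_cthickening_iff, mem_cthickening_iff, ← himage,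
    infEDist_image (isometry_add_left x)]

namespace MeasureTheory.Measure

variable {E : Type*} [NormedAddCommGroup E] [NormedSpace ℝ E] [MeasurableSpace E] [BorelSpace E]
  [FiniteDimensional ℝ E] [Nontrivial E] (μ : Measure E) [μ.IsAddHaarMeasure]

lemma exists_pos_forall_addHaar_cthickening_sphere_lt (r : ℝ) {ε : ℝ≥0∞} (hε : 0 < ε) :
    ∃ a₀ > 0, ∀ a < a₀, ∀ x : E, μ (cthickening a (sphere x r)) < ε := by
  have hlim := tendsto_measure_cthickening_of_isCompact (μ := μ) (isCompact_sphere (0 : E) r)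
  rw [addHaar_sphere] at hlim
  obtain ⟨a₀, ha₀, hsmall⟩ := Metric.eventually_nhds_iff.1 ((tendsto_order.1 hlim).2 ε hε)
  refine ⟨a₀, ha₀, fun a ha x => ?_⟩
  have hmax : dist (max a 0) 0 < a₀ := by
    rw [Real.dist_eq, sub_zero, abs_of_nonneg (le_max_right a 0)]
    exact max_lt ha ha₀
  calc μ (cthickening a (sphere x r)) ≤ μ (cthickening (max a 0) (sphere x r)) :=
        measure_mono (cthickening_mono (le_max_left a 0) _)
    _ = μ (cthickening (max a 0) (sphere 0 r)) := by
        rw [← preimage_add_cthickening_sphere x, measure_preimage_add]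
    _ < ε := hsmall hmax

end MeasureTheory.Measure

section GridCube

variable {d : ℕ} {δ : ℝ}

lemma gridCube_eq_preimage (d : ℕ) (δ : ℝ) (z : Fin d → ℤ) :
    gridCube d δ z = (MeasurableEquiv.toLp 2 (Fin d → ℝ)).symm ⁻¹'
      (univ.pi fun i => Ico (δ * (z i : ℝ) - δ / 2) (δ * (z i : ℝ) + δ / 2)) := by
  ext y
  simp [gridCube, mem_pi, MeasurableEquiv.coe_toLp_symm, mem_Ico]

lemma measurableSet_gridCube (d : ℕ) (δ : ℝ) (z : Fin d → ℤ) : MeasurableSet (gridCube d δ z) := by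
  rw [gridCube_eq_preimage]
  exact (MeasurableSet.univ_pi fun i => measurableSet_Ico).preimage
    (MeasurableEquiv.toLp 2 (Fin d → ℝ)).symm.measurable

lemma volume_gridCube (hδ : 0 ≤ δ) (z : Fin d → ℤ) :
    volume (gridCube d δ z) = ENNReal.ofReal (δ ^ d) := by
  have hside : ∀ i : Fin d,
      volume (Ico (δ * (z i : ℝ) - δ / 2) (δ * (z i : ℝ) + δ / 2)) = ENNReal.ofReal δ := by
    intro i
    rw [Real.volume_Ico]
    ring_nf
  rw [gridCube_eq_preimage,
    (EuclideanSpace.volume_preserving_symm_measurableEquiv_toLp (Fin d)).measure_preimage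
      (MeasurableSet.univ_pi fun i => measurableSet_Ico).nullMeasurableSet,
    volume_pi_pi]
  simp only [hside, Finset.prod_const, Finset.card_univ, Fintype.card_fin, ENNReal.ofReal_pow hδ]

lemma floor_eq_of_mem_gridCube (hδ : 0 < δ) {z : Fin d → ℤ} {y : EuclideanSpace ℝ (Fin d)}
    (hy : y ∈ gridCube d δ z) (i : Fin d) : ⌊y i / δ + 1 / 2⌋ = z i := by
  obtain ⟨hlo, hhi⟩ := hy i
  rw [Int.floor_eq_iff]
  constructor
  · rw [← sub_le_iff_le_add, le_div_iff₀ hδ]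
    linarith
  · rw [← lt_sub_iff_add_lt, div_lt_iff₀ hδ]
    linarith

lemma pairwise_disjoint_gridCube (hδ : 0 < δ) : Pairwise (Disjoint on gridCube d δ) := by
  intro z w hzw
  refine disjoint_left.2 fun y hz hw => hzw (funext fun i => ?_)
  rw [← floor_eq_of_mem_gridCube hδ hz i, floor_eq_of_mem_gridCube hδ hw i]

lemma dist_le_of_mem_gridCube (hδ : 0 ≤ δ) {z : Fin d → ℤ} {p q : EuclideanSpace ℝ (Fin d)}
    (hp : p ∈ gridCube d δ z) (hq : q ∈ gridCube d δ z) : dist p q ≤ δ * √d := by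
  have hcoord : ∀ i, dist (p i) (q i) ≤ δ := fun i => by
    rw [Real.dist_eq, abs_le]
    constructor <;> linarith [hp i, hq i]
  calc dist p q = √(∑ i, dist (p i) (q i) ^ 2) := EuclideanSpace.dist_eq p q
    _ ≤ √(∑ _i : Fin d, δ ^ 2) := by gcongr with i; exact hcoord i
    _ = δ * √d := by
        rw [Finset.sum_const, Finset.card_univ, Fintype.card_fin, nsmul_eq_mul,
          Real.sqrt_mul (Nat.cast_nonneg d), Real.sqrt_sq hδ, mul_comm]

end GridCube

theorem boundary_cubes_estimate_general (d : ℕ) (hd : 1 ≤ d) (r ε : ℝ) (hε : 0 < ε) :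
    ∃ δ' : ℝ, 0 < δ' ∧ ∀ δ ∈ Set.Ioo (0 : ℝ) δ', ∀ x : EuclideanSpace ℝ (Fin d),
      {z : Fin d → ℤ | (gridCube d δ z ∩ sphere x r).Nonempty}.Finite ∧
      δ ^ d * ({z : Fin d → ℤ | (gridCube d δ z ∩ sphere x r).Nonempty}.ncard : ℝ) < ε := by
  have : Nonempty (Fin d) := Fin.pos_iff_nonempty.mp hd
  obtain ⟨a₀, ha₀, hsmall⟩ := Measure.exists_pos_forall_addHaar_cthickening_sphere_lt
    (volume : Measure (EuclideanSpace ℝ (Fin d))) r (ENNReal.ofReal_pos.2 hε)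
  have hsqrt : 0 < √(d : ℝ) := Real.sqrt_pos.2 (by exact_mod_cast hd)
  refine ⟨a₀ / √d, div_pos ha₀ hsqrt, fun δ ⟨hδ, hδa⟩ x => ?_⟩
  have hdiam : δ * √d < a₀ := (lt_div_iff₀ hsqrt).1 hδa
  obtain ⟨hfin, hcard⟩ := finite_and_ncard_mul_le_measure_of_pairwiseDisjoint
    (B := cthickening (δ * √d) (sphere x r)) (ENNReal.ofReal_pos.2 (by positivity)).ne'
    (hsmall _ hdiam x).ne_top (fun z _ => measurableSet_gridCube d δ z)
    ((pairwise_disjoint_gridCube hδ).set_pairwise _) (fun z _ => (volume_gridCube hδ.le z).ge)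
    (fun z hz => subset_cthickening_of_forall_dist_le hz
      fun p hp q hq => dist_le_of_mem_gridCube hδ.le hp hq)
  refine ⟨hfin, (ENNReal.ofReal_lt_ofReal_iff hε).1 ?_⟩
  rw [ENNReal.ofReal_mul (by positivity), ENNReal.ofReal_natCast, mul_comm]
  exact hcard.trans_lt (hsmall _ hdiam x)

/-- Boundary-cubes estimate: the cubes meeting a sphere of radius `r` have total
volume (counted as `δ^d` per cube) less than `ε`, uniformly in the center. -/
theorem boundary_cubes_estimate (d : ℕ) (hd : 1 ≤ d) (r ε : ℝ) (hr : 0 < r) (hε : 0 < ε) :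
    ∃ δ' : ℝ, 0 < δ' ∧ ∀ δ ∈ Set.Ioo (0 : ℝ) δ', ∀ x : EuclideanSpace ℝ (Fin d),
      {z : Fin d → ℤ | (gridCube d δ z ∩ sphere x r).Nonempty}.Finite ∧
      δ ^ d * ({z : Fin d → ℤ | (gridCube d δ z ∩ sphere x r).Nonempty}.ncard : ℝ) < ε :=
  boundary_cubes_estimate_general d hd r ε hε
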